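/- arXiv:1302.4415 — 2 statements merged into one kernel-verified Lean document; each statement's English description precedes it below -/
import Mathlib

section
/- Let M be a set system over V and X ⊆ V. Then max(M) = max(M∂X), where max(M) is the set system of inclusion-maximal member sets of M and ∂ is the dual pivot operation. -/
/-!
A single dual pivot `∂u` leaves the members of `E` containing `u` untouched, and keeps a set
`Y ∌ u` exactly when one but not both of `Y` and `Y ∪ {u}` lie in `E`. Hence every maximal member
of `E` survives, and every member `Z` of `E∂u` lies below a member of `E` (`Z` or `Z ∪ {u}`), so
the maximal members of `E` stay maximal in `E∂u`. Since `∂u` is an involution this gives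
`max(E) = max(E∂u)`, and the theorem follows by applying it once per element of `X`.
-/

open scoped symmDiff

variable {V : Type} [Fintype V] [DecidableEq V]

/-- pivot (twist) of a set system on `X` -/
def pivotOp (E : Finset (Finset V)) (X : Finset V) : Finset (Finset V) :=
  E.image (fun Y => Y ∆ X)

/-- loop complementation of a set system on `u` -/
def loopC (E : Finset (Finset V)) (u : V) : Finset (Finset V) :=
  E ∆ ((E.filter (fun Y => u ∉ Y)).image (fun Y => insert u Y))

/-- the dual pivot ∂u = +u *u +u -/
def dualPivot (E : Finset (Finset V)) (u : V) : Finset (Finset V) :=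
  loopC (pivotOp (loopC E u) {u}) u
/-- the set system of inclusion-maximal members of E -/
def maxSS (E : Finset (Finset V)) : Finset (Finset V) :=
  E.filter (fun Y => ∀ Z ∈ E, Y ⊆ Z → Y = Z)

section DualPivot

omit [Fintype V]

lemma Finset.symmDiff_singleton_of_mem {Y : Finset V} {u : V} (h : u ∈ Y) :
    Y ∆ {u} = Y.erase u := by
  ext x
  by_cases hx : x = u <;> simp [Finset.mem_symmDiff, hx, h]

lemma Finset.symmDiff_singleton_of_notMem {Y : Finset V} {u : V} (h : u ∉ Y) :
    Y ∆ {u} = insert u Y := by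
  ext x
  by_cases hx : x = u <;> simp [Finset.mem_symmDiff, hx, h]

lemma mem_pivotOp {E : Finset (Finset V)} {X Y : Finset V} :
    Y ∈ pivotOp E X ↔ Y ∆ X ∈ E := by
  simp only [pivotOp, Finset.mem_image]
  constructor
  · rintro ⟨Z, hZ, rfl⟩
    simpa using hZ
  · exact fun h => ⟨Y ∆ X, h, by simp⟩

lemma mem_loopC {E : Finset (Finset V)} {u : V} {Y : Finset V} :
    Y ∈ loopC E u ↔ ¬(Y ∈ E ↔ u ∈ Y ∧ Y.erase u ∈ E) := by
  have hinsert : Y ∈ (E.filter (u ∉ ·)).image (insert u) ↔ u ∈ Y ∧ Y.erase u ∈ E := by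
    simp only [Finset.mem_image, Finset.mem_filter]
    constructor
    · rintro ⟨Z, ⟨hZ, hu⟩, rfl⟩
      exact ⟨Finset.mem_insert_self u Z, by rwa [Finset.erase_insert hu]⟩
    · rintro ⟨hu, h⟩
      exact ⟨Y.erase u, ⟨h, Finset.notMem_erase u Y⟩, Finset.insert_erase hu⟩
  rw [loopC, Finset.mem_symmDiff, hinsert]
  tauto

lemma mem_dualPivot_of_mem {E : Finset (Finset V)} {u : V} {Y : Finset V} (h : u ∈ Y) :
    Y ∈ dualPivot E u ↔ Y ∈ E := by
  have hu : u ∉ Y.erase u := Finset.notMem_erase u Y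
  have hY : (Y.erase u) ∆ {u} = Y := by
    rw [Finset.symmDiff_singleton_of_notMem hu, Finset.insert_erase h]
  simp only [dualPivot, mem_loopC, mem_pivotOp, Finset.symmDiff_singleton_of_mem h, hY, h, hu,
    Finset.erase_idem, true_and, false_and, iff_false]
  tauto

lemma mem_dualPivot_of_notMem {E : Finset (Finset V)} {u : V} {Y : Finset V} (h : u ∉ Y) :
    Y ∈ dualPivot E u ↔ ¬(Y ∈ E ↔ insert u Y ∈ E) := by
  have hu : u ∈ insert u Y := Finset.mem_insert_self u Y
  simp only [dualPivot, mem_loopC, mem_pivotOp, Finset.symmDiff_singleton_of_notMem h, h, hu,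
    Finset.erase_insert h, true_and, false_and, iff_false]
  tauto

lemma dualPivot_dualPivot (E : Finset (Finset V)) (u : V) :
    dualPivot (dualPivot E u) u = E := by
  ext Y
  by_cases h : u ∈ Y
  · rw [mem_dualPivot_of_mem h, mem_dualPivot_of_mem h]
  · rw [mem_dualPivot_of_notMem h, mem_dualPivot_of_notMem h,
      mem_dualPivot_of_mem (Finset.mem_insert_self u Y)]
    tauto

lemma exists_superset_mem_of_mem_dualPivot {E : Finset (Finset V)} {u : V} {Z : Finset V}
    (hZ : Z ∈ dualPivot E u) : ∃ W ∈ E, Z ⊆ W := by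
  by_cases hu : u ∈ Z
  · exact ⟨Z, (mem_dualPivot_of_mem hu).mp hZ, subset_rfl⟩
  · rw [mem_dualPivot_of_notMem hu] at hZ
    by_cases hZE : Z ∈ E
    · exact ⟨Z, hZE, subset_rfl⟩
    · exact ⟨insert u Z, by tauto, Finset.subset_insert u Z⟩

end DualPivot

lemma maxSS_subset_maxSS_of_forall_exists_superset {E F : Finset (Finset V)}
    (hEF : maxSS E ⊆ F) (hFE : ∀ Z ∈ F, ∃ W ∈ E, Z ⊆ W) :
    maxSS E ⊆ maxSS F := by
  intro Y hY
  obtain ⟨hYE, hmax⟩ := Finset.mem_filter.mp hY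
  refine Finset.mem_filter.mpr ⟨hEF hY, fun Z hZ hYZ => ?_⟩
  obtain ⟨W, hWE, hZW⟩ := hFE Z hZ
  have hYW : Y = W := hmax W hWE (hYZ.trans hZW)
  exact hYZ.antisymm (hYW ▸ hZW)

lemma maxSS_subset_dualPivot (E : Finset (Finset V)) (u : V) : maxSS E ⊆ dualPivot E u := by
  intro Y hY
  obtain ⟨hYE, hmax⟩ := Finset.mem_filter.mp hY
  by_cases hu : u ∈ Y
  · exact (mem_dualPivot_of_mem hu).mpr hYE
  · have hinsert : insert u Y ∉ E := fun h =>
      hu ((hmax _ h (Finset.subset_insert u Y)) ▸ Finset.mem_insert_self u Y)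
    exact (mem_dualPivot_of_notMem hu).mpr (by tauto)

lemma maxSS_subset_maxSS_dualPivot (E : Finset (Finset V)) (u : V) :
    maxSS E ⊆ maxSS (dualPivot E u) :=
  maxSS_subset_maxSS_of_forall_exists_superset (maxSS_subset_dualPivot E u)
    fun _ => exists_superset_mem_of_mem_dualPivot

lemma maxSS_dualPivot_single (E : Finset (Finset V)) (u : V) :
    maxSS (dualPivot E u) = maxSS E := by
  refine (Finset.Subset.antisymm (maxSS_subset_maxSS_dualPivot E u) ?_).symm
  simpa only [dualPivot_dualPivot] using maxSS_subset_maxSS_dualPivot (dualPivot E u) u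

theorem maxSS_dualPivot_general (E : Finset (Finset V)) (l : List V) :
    maxSS E = maxSS (l.foldl dualPivot E) := by
  induction l generalizing E with
  | nil => rfl
  | cons u l ih => rw [List.foldl_cons, ← ih, maxSS_dualPivot_single]

/-- max(M) = max(M∂X) for any X ⊆ V. -/
theorem maxSS_dualPivot (E : Finset (Finset V)) (X : Finset V)
    (l : List V) (hnd : l.Nodup) (hX : l.toFinset = X) :
    maxSS E = maxSS (l.foldl dualPivot E) :=
  maxSS_dualPivot_general E l
end

section
/- Let F be a field of characteristic 2 and A a principally unimodular V×V matrix over F. Then for all X ⊆ V, M_{A+X} = M_A + X, where A+X denotes A + I_X (adding 1 to the diagonal entries indexed by X) and M+X denotes loop complementation on all elements of X. -/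
open Matrix
open scoped symmDiff

variable {V : Type} [Fintype V] [DecidableEq V] {F : Type} [Field F]

/-- principal submatrix of A indexed by X -/
def pSub (A : Matrix V V F) (X : Finset V) : Matrix X X F :=
  Matrix.of fun i j => A i.1 j.1

open scoped Classical in
/-- the set system of index sets of nonsingular principal submatrices of A -/
noncomputable def MA (A : Matrix V V F) : Finset (Finset V) :=
  Finset.univ.filter (fun X => (pSub A X).det ≠ 0)

/-- A is principally unimodular: all principal minors lie in {0,1,−1} -/
def PU (A : Matrix V V F) : Prop :=
  ∀ Y : Finset V, (pSub A Y).det ∈ ({0, 1, -1} : Set F)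

/-!
Adding `1` at the diagonal position `u` changes, by linearity of the determinant in row `u`,
each principal minor on `Y ∋ u` by the minor on `Y \ {u}`, and leaves the other principal minors
alone. In characteristic `2` the principal minors of a principally unimodular matrix lie in
`{0, 1}`, so `Y` becomes nonsingular exactly when one of `Y`, `Y \ {u}` was nonsingular: this is
loop complementation at `u`. The new matrix is again principally unimodular, so one can
proceed one element of `X` at a time.
-/

theorem Matrix.det_add_single_self {ι R : Type*} [Fintype ι] [DecidableEq ι] [CommRing R]
    (M : Matrix ι ι R) (i : ι) :
    (M + single i i 1).det = M.det + (M.toSquareBlockProp (· ≠ i)).det := by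
  have hrow : M + single i i 1 = M.updateRow i (M i + Pi.single i 1) := by
    ext r c
    by_cases hr : r = i
    · subst hr; simp [single_apply, Pi.single_apply, eq_comm]
    · simp [hr, Ne.symm hr]
  set N := M.updateRow i (Pi.single i 1)
  -- row `i` of `N` is the unit vector `e_i`, so `N` is block triangular with corner block `1`
  have hN : N.det = (M.toSquareBlockProp (· ≠ i)).det := by
    have : Unique {r // ¬ r ≠ i} :=
      ⟨⟨⟨i, not_not.2 rfl⟩⟩, fun r => Subtype.ext (not_not.1 r.2)⟩
    have hblock : N.toSquareBlockProp (· ≠ i) = M.toSquareBlockProp (· ≠ i) := by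
      ext r c; simp [N, toSquareBlockProp_def, r.2]
    have hcorner : N.toSquareBlockProp (fun r => ¬ r ≠ i) default default = 1 := by
      simp [N, toSquareBlockProp_def, not_not.1 (default : {r // ¬ r ≠ i}).2]
    rw [N.twoBlockTriangular_det (· ≠ i), hblock, det_unique (N.toSquareBlockProp _), hcorner,
      mul_one]
    intro r hr c hc
    simp [N, not_not.1 hr, hc]
  rw [hrow, det_updateRow_add, updateRow_eq_self, hN]

lemma CharTwo.add_ne_zero_iff_xor {R : Type*} [Ring R] [CharP R 2] {a b : R}
    (ha : a = 0 ∨ a = 1) (hb : b = 0 ∨ b = 1) : a + b ≠ 0 ↔ Xor (a ≠ 0) (b ≠ 0) := by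
  rcases ha with rfl | rfl <;> rcases hb with rfl | rfl <;>
    simp [CharTwo.add_self_eq_zero, xor_def]

omit [Fintype V] in
lemma mem_loopC_of_mem {E : Finset (Finset V)} {u : V} {Y : Finset V} (hu : u ∈ Y) :
    Y ∈ loopC E u ↔ Xor (Y ∈ E) (Y.erase u ∈ E) := by
  have hinsert : Y ∈ (E.filter (u ∉ ·)).image (insert u) ↔ Y.erase u ∈ E := by
    simp only [Finset.mem_image, Finset.mem_filter]
    constructor
    · rintro ⟨Z, ⟨hZ, hZu⟩, rfl⟩
      rwa [Finset.erase_insert hZu]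
    · exact fun h => ⟨Y.erase u, ⟨h, Finset.notMem_erase u Y⟩, Finset.insert_erase hu⟩
  rw [loopC, Finset.mem_symmDiff, hinsert]
  rfl

omit [Fintype V] in
lemma mem_loopC_of_notMem {E : Finset (Finset V)} {u : V} {Y : Finset V} (hu : u ∉ Y) :
    Y ∈ loopC E u ↔ Y ∈ E := by
  have hinsert : Y ∉ (E.filter (u ∉ ·)).image (insert u) := by
    intro hY
    obtain ⟨Z, -, rfl⟩ := Finset.mem_image.1 hY
    exact hu (Finset.mem_insert_self u Z)
  simp [loopC, Finset.mem_symmDiff, hinsert]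

omit [Fintype V] in
lemma pSub_add_single_of_mem (B : Matrix V V F) {u : V} {Y : Finset V} (hu : u ∈ Y) :
    pSub (B + single u u 1) Y = pSub B Y + single ⟨u, hu⟩ ⟨u, hu⟩ 1 := by
  ext i j
  simp [pSub, single_apply, Subtype.ext_iff]

omit [Fintype V] in
lemma pSub_add_single_of_notMem (B : Matrix V V F) {u : V} {Y : Finset V} (hu : u ∉ Y) :
    pSub (B + single u u 1) Y = pSub B Y := by
  ext i j
  have hi : u ≠ i.1 := fun h => hu (h ▸ i.2)
  simp [pSub, hi]

omit [Fintype V] in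
lemma det_toSquareBlockProp_pSub (B : Matrix V V F) {u : V} {Y : Finset V} (hu : u ∈ Y) :
    ((pSub B Y).toSquareBlockProp (· ≠ ⟨u, hu⟩)).det = (pSub B (Y.erase u)).det := by
  let e : {j : Y // j ≠ ⟨u, hu⟩} ≃ Y.erase u :=
    { toFun j := ⟨j.1.1, Finset.mem_erase.2 ⟨fun h => j.2 (Subtype.ext h), j.1.2⟩⟩
      invFun j := ⟨⟨j.1, Finset.mem_of_mem_erase j.2⟩,
        fun h => Finset.ne_of_mem_erase j.2 (congrArg Subtype.val h)⟩
      left_inv _ := rfl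
      right_inv _ := rfl }
  rw [← det_submatrix_equiv_self e]
  rfl

omit [Fintype V] in
lemma det_pSub_add_single_of_mem (B : Matrix V V F) {u : V} {Y : Finset V} (hu : u ∈ Y) :
    (pSub (B + single u u 1) Y).det = (pSub B Y).det + (pSub B (Y.erase u)).det := by
  rw [pSub_add_single_of_mem B hu, det_add_single_self, det_toSquareBlockProp_pSub B hu]

omit [Fintype V] in
lemma PU.det_eq_zero_or_eq_one [CharP F 2] {A : Matrix V V F} (hA : PU A) (Y : Finset V) :
    (pSub A Y).det = 0 ∨ (pSub A Y).det = 1 := by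
  rcases hA Y with h | h | h
  · exact .inl h
  · exact .inr h
  · exact .inr (by rw [h, CharTwo.neg_eq])

lemma mem_MA {A : Matrix V V F} {Y : Finset V} : Y ∈ MA A ↔ (pSub A Y).det ≠ 0 := by
  classical
  simp [MA]

omit [Fintype V] in
lemma PU.add_single [CharP F 2] {A : Matrix V V F} (hA : PU A) (u : V) :
    PU (A + single u u 1) := by
  intro Y
  by_cases hu : u ∈ Y
  · rw [det_pSub_add_single_of_mem A hu]
    rcases hA.det_eq_zero_or_eq_one Y with h | h <;>
      rcases hA.det_eq_zero_or_eq_one (Y.erase u) with h' | h' <;>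
      simp [h, h', CharTwo.add_self_eq_zero]
  · rw [pSub_add_single_of_notMem A hu]
    exact hA Y

lemma MA_add_single [CharP F 2] {A : Matrix V V F} (hA : PU A) (u : V) :
    MA (A + single u u 1) = loopC (MA A) u := by
  ext Y
  by_cases hu : u ∈ Y
  · rw [mem_loopC_of_mem hu, mem_MA, mem_MA, mem_MA, det_pSub_add_single_of_mem A hu]
    exact CharTwo.add_ne_zero_iff_xor (hA.det_eq_zero_or_eq_one Y)
      (hA.det_eq_zero_or_eq_one (Y.erase u))
  · rw [mem_loopC_of_notMem hu, mem_MA, mem_MA, pSub_add_single_of_notMem A hu]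

omit [Fintype V] in
lemma diagonal_indicator_insert {u : V} {X : Finset V} (hu : u ∉ X) :
    diagonal (fun i => if i ∈ insert u X then (1 : F) else 0) =
      single u u 1 + diagonal (fun i => if i ∈ X then 1 else 0) := by
  rw [← diagonal_single, diagonal_add]
  congr 1
  ext i
  by_cases hi : i = u
  · subst hi; simp [hu]
  · simp [hi]

/-- over a field of characteristic 2, for a principally
unimodular A and X ⊆ V, M_(A+I_X) equals the loop complementation of M_A
on all elements of X (applied in any order). -/
theorem pu_loopC [CharP F 2] (A : Matrix V V F) (hPU : PU A) (X : Finset V)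
    (l : List V) (hnd : l.Nodup) (hX : l.toFinset = X) :
    MA (A + Matrix.diagonal (fun i => if i ∈ X then 1 else 0)) =
      l.foldl loopC (MA A) := by
  subst hX
  induction l generalizing A with
  | nil => simp
  | cons u l ih =>
    obtain ⟨hu, hnd⟩ := List.nodup_cons.1 hnd
    rw [List.toFinset_cons, diagonal_indicator_insert (List.mem_toFinset.not.2 hu), ← add_assoc,
      ih _ (hPU.add_single u) hnd, MA_add_single hPU u, List.foldl_cons]
end
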